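/- Let (G, I, O, λ) be a labeled open graph with I = O and λ ≡ YZ. Then (G, I, O, λ) has a gflow if and only if (G, I, O) is of the register-logic form. -/
import Mathlib


/-- Measurement labels (planes of the Bloch sphere). -/
inductive MLabel | XY | XZ | YZ
deriving DecidableEq

/-- The odd neighborhood of a set `S` of vertices. -/
def oddNbhd {V : Type*} [Fintype V] [DecidableEq V] (G : SimpleGraph V)
    [DecidableRel G.Adj] (S : Finset V) : Finset V :=
  Finset.univ.filter fun v => Odd (G.neighborFinset v ∩ S).card

/-- `(g, ord)` is a gflow for the labeled open graph `(G, I, O, lam)`. -/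
def IsGflow {V : Type*} [Fintype V] [DecidableEq V] (G : SimpleGraph V)
    [DecidableRel G.Adj] (I O : Finset V) (lam : V → MLabel)
    (g : V → Finset V) (ord : V → V → Prop) : Prop :=
  (∀ a b c : V, ord a b → ord b c → ord a c) ∧
  (∀ a : V, ¬ ord a a) ∧
  ∀ u : V, u ∉ O →
    (∀ v ∈ g u, v ∉ I) ∧
    (∀ v ∈ g u, v ≠ u → ord u v) ∧
    (∀ v ∈ oddNbhd G (g u), v ≠ u → ord u v) ∧
    (lam u = MLabel.XY → u ∉ g u ∧ u ∈ oddNbhd G (g u)) ∧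
    (lam u = MLabel.XZ → u ∈ g u ∧ u ∈ oddNbhd G (g u)) ∧
    (lam u = MLabel.YZ → u ∈ g u ∧ u ∉ oddNbhd G (g u))

/-- Register-logic form: no edges between non-output vertices. -/
def RLForm {V : Type*} (G : SimpleGraph V) (O : Finset V) [DecidableEq V] : Prop :=
  ∀ v w : V, G.Adj v w → v ∈ O ∨ w ∈ O

theorem gflow_iff_rl {V : Type*} [Fintype V] [DecidableEq V]
    (G : SimpleGraph V) [DecidableRel G.Adj] (I O : Finset V) (lam : V → MLabel)
    (hIO : I = O)
    (hlam : ∀ u : V, u ∉ O → lam u = MLabel.YZ)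
    (hcomp : ∀ v : V, ∃ w ∈ O, G.Reachable v w) :
    (∃ (g : V → Finset V) (ord : V → V → Prop), IsGflow G I O lam g ord) ↔
      RLForm G O := by
  subst hIO
  constructor
  · rintro ⟨g, ord, htrans, hirr, hspec⟩
    intro v w hadj
    by_contra hbad
    push_neg at hbad
    obtain ⟨hvO, hwO⟩ := hbad
    -- bad vertices: non-outputs with a non-output neighbor
    classical
    let B : Set V := {u | u ∉ I ∧ ∃ n, G.Adj u n ∧ n ∉ I}
    have hBne : B.Nonempty := ⟨v, hvO, w, hadj, hwO⟩
    haveI : IsTrans V (flip ord) := ⟨fun a b c h1 h2 => htrans c b a h2 h1⟩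
    haveI : IsIrrefl V (flip ord) := ⟨fun a => hirr a⟩
    have hwf : WellFounded (flip ord) := Finite.wellFounded_of_trans_of_irrefl _
    obtain ⟨m, hmB, hmax⟩ := hwf.has_min B hBne
    obtain ⟨hmO, n, hmn, hnO⟩ := hmB
    obtain ⟨hgI, hgord, hoddord, _, _, hYZ⟩ := hspec m hmO
    obtain ⟨hmg, hmodd⟩ := hYZ (hlam m hmO)
    have hnm : n ≠ m := fun h => G.irrefl (h ▸ hmn)
    by_cases hn : n ∈ oddNbhd G (g m)
    · exact hmax n ⟨hnO, m, hmn.symm, hmO⟩ (hoddord n hn hnm)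
    · -- |N(n) ∩ g m| is even and contains m, so there is another element x
      have heven : ¬ Odd (G.neighborFinset n ∩ g m).card := by
        simpa [oddNbhd] using hn
      have hmem : m ∈ G.neighborFinset n ∩ g m := by
        simp [SimpleGraph.mem_neighborFinset, hmn.symm, hmg]
      have hcard : 1 < (G.neighborFinset n ∩ g m).card := by
        have hpos : 0 < (G.neighborFinset n ∩ g m).card :=
          Finset.card_pos.mpr ⟨m, hmem⟩
        have h1 : (G.neighborFinset n ∩ g m).card ≠ 1 :=
          fun h => heven (h ▸ odd_one)
        omega
      obtain ⟨x, hx, hxm⟩ := Finset.exists_mem_ne hcard m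
      rw [Finset.mem_inter, SimpleGraph.mem_neighborFinset] at hx
      obtain ⟨hxn, hxg⟩ := hx
      exact hmax x ⟨hgI x hxg, n, hxn.symm, hnO⟩ (hgord x hxg hxm)
  · intro hrl
    refine ⟨fun u => {u}, fun a b => a ∉ I ∧ b ∈ I, ?_, ?_, ?_⟩
    · rintro a b c ⟨ha, hb⟩ ⟨hb', hc⟩; exact absurd hb hb'
    · rintro a ⟨ha, ha'⟩; exact ha ha'
    · intro u huO
      refine ⟨?_, ?_, ?_, ?_, ?_, ?_⟩
      · intro x hx; rw [Finset.mem_singleton] at hx; exact hx ▸ huO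
      · intro x hx hne; rw [Finset.mem_singleton] at hx; exact absurd hx hne
      · intro x hx hne
        simp only [oddNbhd, Finset.mem_filter] at hx
        have hadj : G.Adj x u := by
          by_contra hna
          have : G.neighborFinset x ∩ {u} = ∅ := by
            ext y
            simp only [Finset.mem_inter, SimpleGraph.mem_neighborFinset,
              Finset.mem_singleton, Finset.notMem_empty, iff_false]
            rintro ⟨h1, rfl⟩; exact hna h1
          rw [this] at hx
          simp at hx
        rcases hrl x u hadj with h | h
        · exact ⟨huO, h⟩
        · exact absurd h huO
      · intro h; rw [hlam u huO] at h; exact absurd h (by simp)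
      · intro h; rw [hlam u huO] at h; exact absurd h (by simp)
      · intro h
        refine ⟨Finset.mem_singleton_self u, ?_⟩
        simp only [oddNbhd, Finset.mem_filter, Finset.mem_univ, true_and]
        have : G.neighborFinset u ∩ {u} = ∅ := by
          ext y
          simp only [Finset.mem_inter, SimpleGraph.mem_neighborFinset,
            Finset.mem_singleton, Finset.notMem_empty, iff_false]
          rintro ⟨h1, rfl⟩; exact G.irrefl h1
        rw [this]
        simp
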